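/- If s_A, s_V, z, x satisfy 0 < x < s_V ≤ s_A and z > 2·s_V and z·((1/2)·s_A − x) > s_A·x, then there exist b, g, h all strictly between 0 and 1 such that: the aggregator is indifferent between honesty and dishonesty (b·(g·(−s_A)+(1−g)·z)+(1−b)·(−s_A)=0) and the validator is indifferent between searching and not searching (b·g·(h·(−s_V)+(1−h)·(s_A/2))+(1−b)·((1−h)·(s_A/2)−x)=0). -/
import Mathlib


theorem mixed_equilibrium_exists (sA sV z x : ℝ)
    (hx : 0 < x) (hxV : x < sV) (hVA : sV ≤ sA)
    (hz : z > 2 * sV) (hzbig : z * ((1/2) * sA - x) > sA * x) :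
    ∃ b g h : ℝ, 0 < b ∧ b < 1 ∧ 0 < g ∧ g < 1 ∧ 0 < h ∧ h < 1 ∧
      b * (g * (-sA) + (1 - g) * z) + (1 - b) * (-sA) = 0 ∧
      b * g * (h * (-sV) + (1 - h) * (sA / 2)) + (1 - b) * ((1 - h) * (sA / 2) - x) = 0 := by
  have hsV : 0 < sV := lt_trans hx hxV
  have hsA : 0 < sA := lt_of_lt_of_le hsV hVA
  have hzpos : 0 < z := lt_trans (by linarith) hz
  have hxA : x < sA / 2 := by
    by_contra hcon
    push_neg at hcon
    nlinarith
  set b : ℝ := 2 * sA / (2 * sA + z) with hb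
  set g : ℝ := z / (2 * (sA + z)) with hg
  have hD1 : (0:ℝ) < 2 * sA + z := by linarith
  have hD2 : (0:ℝ) < 2 * (sA + z) := by linarith
  have hb0 : 0 < b := div_pos (by linarith) hD1
  have hb1 : b < 1 := by
    rw [hb, div_lt_one hD1]; linarith
  have hg0 : 0 < g := div_pos hzpos hD2
  have hg1 : g < 1 := by
    rw [hg, div_lt_one hD2]; linarith
  have hA0 : 0 < b * g := mul_pos hb0 hg0
  have hB0 : 0 < 1 - b := by linarith
  set C : ℝ := (b * g + (1 - b)) * (sA / 2) with hC
  have hC0 : 0 < C := mul_pos (by linarith) (by linarith)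
  have hnum : 0 < C - (1 - b) * x := by
    have : (1 - b) * x < (1 - b) * (sA / 2) := by
      exact mul_lt_mul_of_pos_left hxA hB0
    nlinarith [mul_pos hA0 (by linarith : (0:ℝ) < sA / 2)]
  have hden : 0 < C + b * g * sV := by positivity
  set h : ℝ := (C - (1 - b) * x) / (C + b * g * sV) with hh
  have hh0 : 0 < h := div_pos hnum hden
  have hh1 : h < 1 := by
    rw [hh, div_lt_one hden]
    nlinarith [mul_pos hA0 hsV]
  refine ⟨b, g, h, hb0, hb1, hg0, hg1, hh0, hh1, ?_, ?_⟩
  · rw [hb, hg]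
    field_simp
    ring
  · have key : h * (C + b * g * sV) = C - (1 - b) * x := by
      rw [hh, div_mul_cancel₀ _ (ne_of_gt hden)]
    rw [hC] at key
    nlinarith [key]
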